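/- The pair (α_n, β_n) with α_0 = 1, α_n = 2(-1)^n q^{n^2} for n ≥ 1, and β_n = (q; q^2)_n^2 / (q^2; q^2)_{2n}, is a Bailey pair relative to (1, q^2); that is, for all n ≥ 0, β_n = ∑_{r=0}^n α_r / ((q^2; q^2)_{n-r} (q^2; q^2)_{n+r}). -/

import Mathlib

/-!
Multiplying by `(q²;q²)_{2n}` turns the Bailey sum into `∑_r α_r [2n, n+r]_{q²}`. The q-binomial
theorem at `x = q^{1-2n}`, after completing the square in the exponent, reads
`∑_{j=0}^{2n} (-1)^{j+n} q^{(j-n)²} [2n, j]_{q²} = (-1)^n q^{n²} (q^{1-2n}; q²)_{2n}`, and the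
right side is `(q;q²)_n²`: the upper half of the product is `(q;q²)_n`, and reversing the lower
half turns it into `(-1)^n q^{-n²} (q;q²)_n`. Finally the symmetry `j ↦ 2n - j` folds the sum over
`j` into a sum over `r = |j - n|`, which is where the weight `2` of `α_r`, `r ≥ 1`, comes from.
-/

/-- The infinite q-Pochhammer symbol `(a; q)_∞ = ∏_{j ≥ 0} (1 - a q^j)`. -/
noncomputable def qPochInf (a q : ℂ) : ℂ := ∏' j : ℕ, (1 - a * q ^ j)

/-- The finite q-Pochhammer symbol `(a; q)_n = ∏_{j = 0}^{n-1} (1 - a q^j)`. -/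
noncomputable def qPoch (a q : ℂ) (n : ℕ) : ℂ := ∏ j ∈ Finset.range n, (1 - a * q ^ j)

open Finset

section qPoch

variable (a q : ℂ)

@[simp]
lemma qPoch_zero : qPoch a q 0 = 1 := prod_range_zero _

lemma qPoch_succ (n : ℕ) : qPoch a q (n + 1) = qPoch a q n * (1 - a * q ^ n) :=
  prod_range_succ _ _

lemma qPoch_succ' (n : ℕ) : qPoch a q (n + 1) = (1 - a) * qPoch (a * q) q n := by
  rw [qPoch, prod_range_succ', mul_comm]
  simp only [qPoch, pow_succ', mul_assoc, pow_zero, mul_one]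

lemma qPoch_add (m n : ℕ) : qPoch a q (m + n) = qPoch a q m * qPoch (a * q ^ m) q n := by
  simp only [qPoch, prod_range_add, pow_add, mul_assoc]

end qPoch

lemma qPoch_ne_zero {a q : ℂ} (ha : ‖a‖ < 1) (hq : ‖q‖ ≤ 1) (n : ℕ) : qPoch a q n ≠ 0 := by
  refine prod_ne_zero_iff.mpr fun j _ ↦ sub_ne_zero.mpr fun h ↦ ?_
  have : ‖a * q ^ j‖ < 1 := by
    rw [norm_mul, norm_pow]
    exact mul_lt_one_of_nonneg_of_lt_one_left (norm_nonneg a) ha (pow_le_one₀ (norm_nonneg q) hq)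
  simp [← h] at this

-- The exponent is an integer so that `a = q ^ (1 - 2n)`, `b = q` and base `q²` satisfy the
-- hypothesis for every `n`, including `n = 0`.
lemma prod_neg_mul_qPoch_of_mul_zpow_eq_one {a b q : ℂ} {n : ℕ}
    (h : a * b * q ^ ((n : ℤ) - 1) = 1) :
    (∏ i ∈ range n, -(b * q ^ i)) * qPoch a q n = qPoch b q n := by
  rw [qPoch, ← prod_range_reflect (fun j ↦ 1 - a * q ^ j), ← prod_mul_distrib]
  refine prod_congr rfl fun i hi ↦ ?_
  have hin : i < n := mem_range.mp hi
  have : q ^ ((n : ℤ) - 1) = q ^ (n - 1 - i) * q ^ i := by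
    rw [← pow_add, Nat.sub_add_cancel (by omega), ← zpow_natCast, Nat.cast_sub (by omega),
      Nat.cast_one]
  rw [this] at h
  linear_combination h

lemma prod_range_neg_mul_sq_pow (q : ℂ) (n : ℕ) :
    ∏ i ∈ range n, -(q * (q ^ 2) ^ i) = (-1) ^ n * q ^ (n ^ 2) := by
  induction n with
  | zero => simp
  | succ n ih => rw [prod_range_succ, ih]; ring

section gaussBinom

variable {R : Type*} [Semiring R] (Q : R)

def gaussBinom : ℕ → ℕ → R
  | _, 0 => 1
  | 0, _ + 1 => 0
  | m + 1, j + 1 => Q ^ (j + 1) * gaussBinom m (j + 1) + gaussBinom m j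

@[simp]
lemma gaussBinom_zero_right (m : ℕ) : gaussBinom Q m 0 = 1 := by cases m <;> rfl

lemma gaussBinom_succ_succ (m j : ℕ) :
    gaussBinom Q (m + 1) (j + 1) = Q ^ (j + 1) * gaussBinom Q m (j + 1) + gaussBinom Q m j :=
  rfl

lemma gaussBinom_of_lt : ∀ {m j : ℕ}, m < j → gaussBinom Q m j = 0
  | 0, _ + 1, _ => rfl
  | m + 1, j + 1, h => by
    rw [gaussBinom_succ_succ, gaussBinom_of_lt (by omega), gaussBinom_of_lt (by omega)]
    simp

@[simp]
lemma gaussBinom_self : ∀ m : ℕ, gaussBinom Q m m = 1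
  | 0 => rfl
  | m + 1 => by rw [gaussBinom_succ_succ, gaussBinom_of_lt Q m.lt_succ_self, gaussBinom_self m]; simp

end gaussBinom

lemma gaussBinom_add_mul_qPoch (Q : ℂ) :
    ∀ j k : ℕ, gaussBinom Q (j + k) j * (qPoch Q Q j * qPoch Q Q k) = qPoch Q Q (j + k)
  | j, 0 => by simp
  | 0, k + 1 => by simp
  | j + 1, k + 1 => by
    have hj := gaussBinom_add_mul_qPoch Q j (k + 1)
    have hk := gaussBinom_add_mul_qPoch Q (j + 1) k
    rw [show j + (k + 1) = j + k + 1 by omega] at hj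
    rw [show j + 1 + k = j + k + 1 by omega] at hk
    rw [show j + 1 + (k + 1) = j + k + 1 + 1 by omega, gaussBinom_succ_succ]
    simp only [qPoch_succ] at hj hk ⊢
    linear_combination Q ^ (j + 1) * (1 - Q * Q ^ k) * hk + (1 - Q * Q ^ j) * hj

lemma sum_gaussBinom_eq_qPoch (Q : ℂ) (m : ℕ) (x : ℂ) :
    ∑ j ∈ range (m + 1), (-1) ^ j * Q ^ j.choose 2 * x ^ j * gaussBinom Q m j = qPoch x Q m := by
  induction m generalizing x with
  | zero => simp
  | succ m ih =>
    set t : ℕ → ℂ → ℕ → ℂ := fun m x j ↦ (-1) ^ j * Q ^ j.choose 2 * x ^ j * gaussBinom Q m j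
    have ht : ∀ j, t (m + 1) x (j + 1) = t m (x * Q) (j + 1) - x * t m (x * Q) j := by
      intro j
      simp only [t, gaussBinom_succ_succ, Nat.choose_succ_succ', Nat.choose_one_right, pow_succ,
        pow_add, mul_pow]
      ring
    have hlast : t m (x * Q) (m + 1) = 0 := by simp [t, gaussBinom_of_lt Q m.lt_succ_self]
    have ih' : ∑ j ∈ range (m + 1), t m (x * Q) j = qPoch (x * Q) Q m := ih (x * Q)
    have hshift : ∑ j ∈ range (m + 1), t m (x * Q) (j + 1) + t m (x * Q) 0 =
        ∑ j ∈ range (m + 1), t m (x * Q) j := by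
      rw [← sum_range_succ', sum_range_succ, hlast, add_zero]
    have h0 : t (m + 1) x 0 = t m (x * Q) 0 := by simp [t]
    change ∑ j ∈ range (m + 2), t (m + 1) x j = _
    rw [sum_range_succ', qPoch_succ', ← ih']
    simp only [ht, sum_sub_distrib, ← mul_sum, h0]
    linear_combination hshift

lemma sum_range_two_mul_add_one_of_symm {R : Type*} [Semiring R] (f : ℕ → R) (n : ℕ)
    (hf : ∀ r ≤ n, f (n - r) = f (n + r)) :
    ∑ j ∈ range (2 * n + 1), f j = ∑ r ∈ range (n + 1), (if r = 0 then 1 else 2) * f (n + r) := by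
  have hlow : ∑ j ∈ range n, f j = ∑ r ∈ range n, f (n + (r + 1)) := by
    rw [← sum_range_reflect]
    refine sum_congr rfl fun r hr ↦ ?_
    rw [← hf (r + 1) (mem_range.mp hr), Nat.sub_sub, add_comm 1 r]
  rw [show 2 * n + 1 = n + (n + 1) by ring, sum_range_add, hlow, sum_range_succ', sum_range_succ']
  simp only [Nat.add_one_ne_zero, if_false, if_true, two_mul, one_mul, sum_add_distrib]
  abel

lemma qPoch_sq_div_eq_sum {q : ℂ} (hq : q ≠ 0) (hQ : ∀ k, qPoch (q ^ 2) (q ^ 2) k ≠ 0) (n : ℕ) :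
    qPoch q (q ^ 2) n ^ 2 / qPoch (q ^ 2) (q ^ 2) (2 * n) =
      ∑ j ∈ range (2 * n + 1), (-1) ^ (j + n) * q ^ (((j : ℤ) - n) ^ 2) /
        (qPoch (q ^ 2) (q ^ 2) j * qPoch (q ^ 2) (q ^ 2) (2 * n - j)) := by
  set x := q ^ ((1 : ℤ) - 2 * n)
  have hprod : (-1) ^ n * q ^ (n ^ 2) * qPoch x (q ^ 2) (2 * n) = qPoch q (q ^ 2) n ^ 2 := by
    have hx : x * q * (q ^ 2) ^ ((n : ℤ) - 1) = 1 := by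
      rw [← zpow_natCast q 2, ← zpow_mul, ← zpow_add_one₀ hq, ← zpow_add₀ hq]
      ring_nf
      exact zpow_zero q
    have hxQ : x * (q ^ 2) ^ n = q := by
      rw [← pow_mul, ← zpow_natCast, ← zpow_add₀ hq]
      push_cast
      ring_nf
      exact zpow_one q
    rw [two_mul, qPoch_add, hxQ, ← prod_range_neg_mul_sq_pow, ← mul_assoc,
      prod_neg_mul_qPoch_of_mul_zpow_eq_one hx]
    exact (sq _).symm
  have hsquare (j : ℕ) : q ^ (n ^ 2) * (q ^ 2) ^ j.choose 2 * x ^ j = q ^ (((j : ℤ) - n) ^ 2) := by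
    have hc : ((j.choose 2 : ℕ) : ℚ) * 2 = j * (j - 1) := by rw [Nat.cast_choose_two]; ring
    have hc' : ((j.choose 2 : ℕ) : ℤ) * 2 = j * (j - 1) := by exact_mod_cast hc
    rw [← pow_mul, ← zpow_natCast x j, ← zpow_mul, ← zpow_natCast q (n ^ 2),
      ← zpow_natCast q (2 * _), ← zpow_add₀ hq, ← zpow_add₀ hq]
    congr 1
    push_cast
    linear_combination hc'
  rw [← hprod, ← sum_gaussBinom_eq_qPoch, mul_sum, sum_div]
  refine sum_congr rfl fun j hj ↦ ?_
  have hgb := gaussBinom_add_mul_qPoch (q ^ 2) j (2 * n - j)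
  rw [Nat.add_sub_cancel' (Nat.lt_succ_iff.mp (mem_range.mp hj))] at hgb
  rw [div_eq_div_iff (hQ _) (mul_ne_zero (hQ _) (hQ _)), ← hsquare]
  linear_combination (-1) ^ n * (-1) ^ j * q ^ (n ^ 2) * (q ^ 2) ^ j.choose 2 * x ^ j * hgb

lemma qPoch_sq_div_eq_sum_range_succ {q : ℂ} (hq : q ≠ 0)
    (hQ : ∀ k, qPoch (q ^ 2) (q ^ 2) k ≠ 0) (n : ℕ) :
    qPoch q (q ^ 2) n ^ 2 / qPoch (q ^ 2) (q ^ 2) (2 * n) =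
      ∑ r ∈ range (n + 1), (if r = 0 then 1 else 2) *
        ((-1) ^ r * q ^ (r ^ 2) / (qPoch (q ^ 2) (q ^ 2) (n - r) * qPoch (q ^ 2) (q ^ 2) (n + r))) := by
  set f : ℕ → ℂ := fun j ↦ (-1) ^ (j + n) * q ^ (((j : ℤ) - n) ^ 2) /
    (qPoch (q ^ 2) (q ^ 2) j * qPoch (q ^ 2) (q ^ 2) (2 * n - j))
  have hf_add (r : ℕ) : f (n + r) =
      (-1) ^ r * q ^ (r ^ 2) / (qPoch (q ^ 2) (q ^ 2) (n - r) * qPoch (q ^ 2) (q ^ 2) (n + r)) := by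
    simp only [f]
    rw [show n + r + n = r + 2 * n by omega, pow_add, pow_mul, neg_one_sq, one_pow, mul_one,
      show 2 * n - (n + r) = n - r by omega, mul_comm (qPoch _ _ (n + r))]
    push_cast
    rw [add_sub_cancel_left, ← Nat.cast_pow, zpow_natCast]
  have hf_sub (r : ℕ) (hr : r ≤ n) : f (n - r) =
      (-1) ^ r * q ^ (r ^ 2) / (qPoch (q ^ 2) (q ^ 2) (n - r) * qPoch (q ^ 2) (q ^ 2) (n + r)) := by
    simp only [f]
    rw [show n - r + n = r + 2 * (n - r) by omega, pow_add, pow_mul, neg_one_sq, one_pow, mul_one,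
      show 2 * n - (n - r) = n + r by omega, Nat.cast_sub hr, sub_sub_cancel_left, neg_sq,
      ← Nat.cast_pow, zpow_natCast]
  rw [qPoch_sq_div_eq_sum hq hQ n,
    sum_range_two_mul_add_one_of_symm f n fun r hr ↦ (hf_sub r hr).trans (hf_add r).symm]
  exact sum_congr rfl fun r _ ↦ by rw [hf_add]

/-- The pair `α_0 = 1`, `α_n = 2(-1)^n q^{n^2}` (n ≥ 1),
`β_n = (q;q^2)_n^2/(q^2;q^2)_{2n}` is a Bailey pair relative to `(1, q^2)`. -/
theorem bailey_pair (q : ℂ) (hq : ‖q‖ < 1) (n : ℕ) :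
    qPoch q (q ^ 2) n ^ 2 / qPoch (q ^ 2) (q ^ 2) (2 * n) =
      ∑ r ∈ Finset.range (n + 1),
        (if r = 0 then (1 : ℂ) else 2 * (-1) ^ r * q ^ (r ^ 2)) /
          (qPoch (q ^ 2) (q ^ 2) (n - r) * qPoch (q ^ 2) (q ^ 2) (n + r)) := by
  rcases eq_or_ne q 0 with rfl | hq0
  · rw [sum_range_succ', sum_eq_zero fun r _ ↦ by simp]
    simp [qPoch]
  have hQ : ‖q ^ 2‖ < 1 := by rw [norm_pow]; exact pow_lt_one₀ (norm_nonneg q) hq two_ne_zero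
  rw [qPoch_sq_div_eq_sum_range_succ hq0 (qPoch_ne_zero hQ hQ.le) n]
  refine sum_congr rfl fun r _ ↦ ?_
  split_ifs with hr
  · simp [hr]
  · ring
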